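/- arXiv:2411.17622 — 3 statements merged into one kernel-verified Lean document; each statement's English description precedes it below -/
import Mathlib

section
/- Let {x_n} and {y_n} be sequences of non-negative real numbers, and let a > 0 and b ≥ 0 be real numbers such that x_{n+1} ≤ b·x_n + a·y_n for all n ≫ 1. Then limsup_{n→∞} x_n^{1/n} ≤ max(b, limsup_{n→∞} y_n^{1/n}). -/
/-!
Take any `q > max(b, limsup yₙ^{1/n})`. Eventually `yₙ ≤ qⁿ` and `b < q`, so the recursion gives
`x_{n+1} ≤ q xₙ + a qⁿ`, i.e. the normalised sequence `xₙ / qⁿ` grows by at most `a / q` per step.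
Hence `xₙ ≤ (C + D n) qⁿ`, and a polynomial factor does not change the `n`-th root asymptotically:
`xₙ ≤ rⁿ` eventually for every `r > q`, so `limsup xₙ^{1/n} ≤ q`.
-/

open CategoryTheory Filter IsLocalRing
open scoped ENNReal

noncomputable section

/-- The complexity of a sequence of reals: the smallest `b : ℕ` such that
`a n ≤ α * n ^ (b - 1)` for some `α > 0` and all large `n`; `⊤` if none exists. -/
def seqCx (a : ℕ → ℝ) : ℕ∞ :=
  sInf {b : ℕ∞ | ∃ c : ℕ, b = c ∧ ∃ α : ℝ, 0 < α ∧
    ∀ᶠ n in atTop, a n ≤ α * (n : ℝ) ^ ((c : ℤ) - 1)}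

/-- The curvature of a sequence: `limsup aₙ^{1/n}` (valued in `ℝ≥0∞`). -/
def seqCurv (a : ℕ → ℝ) : ℝ≥0∞ :=
  atTop.limsup fun n => (ENNReal.ofReal (a n)) ^ (1 / (n : ℝ))

open Topology
open scoped NNReal

lemma ENNReal.le_of_forall_coe_gt {x y : ℝ≥0∞} (h : ∀ q : ℝ≥0, y < q → x ≤ q) : x ≤ y :=
  le_of_forall_gt_imp_ge_of_dense fun _ hc ↦
    let ⟨q, hyq, hqc⟩ := ENNReal.lt_iff_exists_nnreal_btwn.mp hc
    (h q hyq).trans hqc.le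

lemma exists_eventually_le_add_mul_of_le_add {u : ℕ → ℝ} {d : ℝ}
    (h : ∀ᶠ n in atTop, u (n + 1) ≤ u n + d) : ∃ C, ∀ᶠ n in atTop, u n ≤ C + n * d := by
  obtain ⟨N, hN⟩ := eventually_atTop.mp h
  refine ⟨u N - N * d, eventually_atTop.mpr ⟨N, fun n hn ↦ ?_⟩⟩
  induction n, hn using Nat.le_induction with
  | base => simp
  | succ n hn ih => push_cast; linarith [hN n hn]

lemma exists_eventually_le_affine_mul_pow {x : ℕ → ℝ} {q a : ℝ} (hq : 0 < q)
    (h : ∀ᶠ n in atTop, x (n + 1) ≤ q * x n + a * q ^ n) :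
    ∃ C, ∀ᶠ n in atTop, x n ≤ (C + a / q * n) * q ^ n := by
  have hstep : ∀ᶠ n in atTop, x (n + 1) / q ^ (n + 1) ≤ x n / q ^ n + a / q := by
    filter_upwards [h] with n hn
    rw [div_le_iff₀ (by positivity)]
    calc x (n + 1) ≤ q * x n + a * q ^ n := hn
      _ = (x n / q ^ n + a / q) * q ^ (n + 1) := by field_simp; ring
  obtain ⟨C, hC⟩ := exists_eventually_le_add_mul_of_le_add (u := fun n ↦ x n / q ^ n) hstep
  refine ⟨C, hC.mono fun n hn ↦ ?_⟩
  rw [← div_le_iff₀ (by positivity)]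
  linarith

lemma eventually_affine_mul_pow_le_pow (C D : ℝ) {q r : ℝ} (hq : 0 ≤ q) (hqr : q < r) :
    ∀ᶠ n : ℕ in atTop, (C + D * n) * q ^ n ≤ r ^ n := by
  have hr : 0 < r := hq.trans_lt hqr
  have hρ : 0 ≤ q / r := div_nonneg hq hr.le
  have hρ1 : q / r < 1 := (div_lt_one hr).2 hqr
  have htendsto : Tendsto (fun n : ℕ ↦ C * (q / r) ^ n + D * (n * (q / r) ^ n)) atTop (𝓝 0) := by
    simpa using ((tendsto_pow_atTop_nhds_zero_of_lt_one hρ hρ1).const_mul C).add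
      ((tendsto_self_mul_const_pow_of_lt_one hρ hρ1).const_mul D)
  filter_upwards [htendsto.eventually_lt_const one_pos] with n hn
  have hrn : 0 < r ^ n := pow_pos hr n
  calc (C + D * n) * q ^ n = (C * (q / r) ^ n + D * (n * (q / r) ^ n)) * r ^ n := by
        rw [div_pow]; field_simp
    _ ≤ r ^ n := mul_le_of_le_one_left hrn.le hn.le

lemma ofReal_rpow_one_div_le_coe_iff {t : ℝ} {r : ℝ≥0} {n : ℕ} (hn : n ≠ 0) :
    ENNReal.ofReal t ^ (1 / (n : ℝ)) ≤ r ↔ t ≤ (r : ℝ) ^ n := by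
  rw [one_div, ENNReal.rpow_inv_le_iff (by positivity), ENNReal.rpow_natCast, ← ENNReal.coe_pow,
    ENNReal.ofReal_le_iff_le_toReal ENNReal.coe_ne_top, ENNReal.coe_toReal, NNReal.coe_pow]

lemma seqCurv_le_of_eventually_le_pow {x : ℕ → ℝ} {r : ℝ≥0}
    (h : ∀ᶠ n in atTop, x n ≤ (r : ℝ) ^ n) : seqCurv x ≤ r :=
  limsup_le_of_le (by isBoundedDefault) <| by
    filter_upwards [h, eventually_ne_atTop 0] with n hn hn0
    exact (ofReal_rpow_one_div_le_coe_iff hn0).2 hn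

lemma eventually_le_pow_of_seqCurv_lt {y : ℕ → ℝ} {q : ℝ≥0} (h : seqCurv y < q) :
    ∀ᶠ n in atTop, y n ≤ (q : ℝ) ^ n := by
  filter_upwards [eventually_lt_of_limsup_lt h, eventually_ne_atTop 0] with n hn hn0
  exact (ofReal_rpow_one_div_le_coe_iff hn0).1 hn.le

lemma seqCurv_le_of_eventually_le_affine_mul_pow {x : ℕ → ℝ} {q : ℝ≥0} (C D : ℝ)
    (h : ∀ᶠ n in atTop, x n ≤ (C + D * n) * (q : ℝ) ^ n) : seqCurv x ≤ q :=
  ENNReal.le_of_forall_coe_gt fun r hqr ↦ seqCurv_le_of_eventually_le_pow <| by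
    filter_upwards [h, eventually_affine_mul_pow_le_pow C D q.2 (by exact_mod_cast hqr)]
      with n hxn hn using hxn.trans hn

theorem stmt2_general (x y : ℕ → ℝ) (hx : ∀ n, 0 ≤ x n)
    (a b : ℝ) (ha : 0 < a)
    (h : ∀ᶠ n in atTop, x (n + 1) ≤ b * x n + a * y n) :
    seqCurv x ≤ max (ENNReal.ofReal b) (seqCurv y) := by
  refine ENNReal.le_of_forall_coe_gt fun q hq ↦ ?_
  obtain ⟨hbq, hq0⟩ : b < q ∧ 0 < (q : ℝ) := by
    rw [← ENNReal.ofReal_lt_ofReal_iff', ENNReal.ofReal_coe_nnreal]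
    exact le_max_left _ _ |>.trans_lt hq
  have hrec : ∀ᶠ n in atTop, x (n + 1) ≤ q * x n + a * (q : ℝ) ^ n := by
    filter_upwards [h, eventually_le_pow_of_seqCurv_lt (le_max_right _ _ |>.trans_lt hq)]
      with n hn hyn
    exact hn.trans <| add_le_add (mul_le_mul_of_nonneg_right hbq.le (hx n))
      (mul_le_mul_of_nonneg_left hyn ha.le)
  obtain ⟨C, hC⟩ := exists_eventually_le_affine_mul_pow hq0 hrec
  exact seqCurv_le_of_eventually_le_affine_mul_pow C _ hC

theorem stmt2 (x y : ℕ → ℝ) (hx : ∀ n, 0 ≤ x n) (hy : ∀ n, 0 ≤ y n)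
    (a b : ℝ) (ha : 0 < a) (hb : 0 ≤ b)
    (h : ∀ᶠ n in atTop, x (n + 1) ≤ b * x n + a * y n) :
    seqCurv x ≤ max (ENNReal.ofReal b) (seqCurv y) :=
  stmt2_general x y hx a b ha h

end
end

section
/- Let {x_n} be a sequence of non-negative integers and let a, b be positive real numbers. Then limsup_{n→∞} (a·x_{n+1} + b·x_n)^{1/n} = limsup_{n→∞} x_n^{1/n}. -/
open CategoryTheory Filter IsLocalRing
open scoped ENNReal

noncomputable section

/-! The curvature of `u : ℕ → ℝ≥0∞` is its exponential growth rate: `curvature u < c` forces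
`u n ≤ c ^ n` eventually, and `u n ≤ C * c ^ n` eventually (with `C < ⊤`) forces
`curvature u ≤ c`, because `C ^ (1 / n) → 1`. Hence curvature is unchanged by positive constant
factors, does not increase under the shift `n ↦ n + 1`, and takes sums to maxima. -/

open scoped NNReal Topology

lemma ENNReal.tendsto_rpow_one_div_natCast {K : ℝ≥0∞} (h0 : K ≠ 0) (hT : K ≠ ⊤) :
    Tendsto (fun n : ℕ => K ^ (1 / (n : ℝ))) atTop (𝓝 1) := by
  lift K to ℝ≥0 using hT
  have hK : K ≠ 0 := by exact_mod_cast h0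
  have hreal : Tendsto (fun n : ℕ => (K : ℝ) ^ (1 / (n : ℝ))) atTop (𝓝 1) := by
    simpa [Function.comp_def] using
      (Real.continuousAt_const_rpow (NNReal.coe_ne_zero.2 hK)).tendsto.comp
        tendsto_one_div_atTop_nhds_zero_nat
  simp_rw [← ENNReal.coe_rpow_of_ne_zero hK, ← ENNReal.coe_one, ENNReal.tendsto_coe,
    ← NNReal.tendsto_coe, NNReal.coe_rpow]
  exact hreal

def curvature (u : ℕ → ℝ≥0∞) : ℝ≥0∞ :=
  atTop.limsup fun n => u n ^ (1 / (n : ℝ))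

lemma seqCurv_eq_curvature (a : ℕ → ℝ) :
    seqCurv a = curvature (fun n => ENNReal.ofReal (a n)) := rfl

section curvature

variable {u v : ℕ → ℝ≥0∞} {c : ℝ≥0∞}

lemma curvature_le_of_eventually_le_mul_pow {C : ℝ≥0∞} (hC : C ≠ ⊤)
    (h : ∀ᶠ n in atTop, u n ≤ C * c ^ n) : curvature u ≤ c := by
  have hbound : ∀ᶠ n : ℕ in atTop, u n ^ (1 / (n : ℝ)) ≤ (C ⊔ 1) ^ (1 / (n : ℝ)) * c := by
    filter_upwards [h, eventually_ne_atTop 0] with n hn hn0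
    calc u n ^ (1 / (n : ℝ)) ≤ ((C ⊔ 1) * c ^ n) ^ (1 / (n : ℝ)) := by
          gcongr
          exact hn.trans (by gcongr; exact le_max_left _ _)
      _ = (C ⊔ 1) ^ (1 / (n : ℝ)) * c := by
          rw [ENNReal.mul_rpow_of_nonneg _ _ (by positivity), one_div,
            ENNReal.pow_rpow_inv_natCast hn0]
  have htend : Tendsto (fun n : ℕ => (C ⊔ 1) ^ (1 / (n : ℝ)) * c) atTop (𝓝 c) := by
    simpa using ENNReal.Tendsto.mul_const
      (ENNReal.tendsto_rpow_one_div_natCast (by simp) (by simp [hC])) (.inl one_ne_zero)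
  exact (limsup_le_limsup hbound).trans_eq htend.limsup_eq

lemma eventually_le_pow_of_curvature_lt (h : curvature u < c) :
    ∀ᶠ n in atTop, u n ≤ c ^ n := by
  filter_upwards [eventually_lt_of_limsup_lt h, eventually_ne_atTop 0] with n hn hn0
  calc u n = (u n ^ (1 / (n : ℝ))) ^ n := by rw [one_div, ENNReal.rpow_inv_natCast_pow hn0]
    _ ≤ c ^ n := by gcongr

lemma curvature_le_of_eventually_le_mul {K : ℝ≥0∞} (hK : K ≠ ⊤)
    (h : ∀ᶠ n in atTop, u n ≤ K * v n) : curvature u ≤ curvature v := by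
  refine le_of_forall_gt_imp_ge_of_dense fun c hc => curvature_le_of_eventually_le_mul_pow hK ?_
  filter_upwards [h, eventually_le_pow_of_curvature_lt hc] with n huv hv
  exact huv.trans (by gcongr)

lemma curvature_const_mul {K : ℝ≥0∞} (h0 : K ≠ 0) (hT : K ≠ ⊤) :
    curvature (fun n => K * u n) = curvature u := by
  refine le_antisymm (curvature_le_of_eventually_le_mul hT (.of_forall fun n => le_rfl))
    (curvature_le_of_eventually_le_mul (ENNReal.inv_ne_top.2 h0) (.of_forall fun n => ?_))
  rw [← mul_assoc, ENNReal.inv_mul_cancel h0 hT, one_mul]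

lemma curvature_add : curvature (fun n => u n + v n) = max (curvature u) (curvature v) := by
  refine le_antisymm (le_of_forall_gt_imp_ge_of_dense fun c hc => ?_) (max_le ?_ ?_)
  · rw [max_lt_iff] at hc
    refine curvature_le_of_eventually_le_mul_pow (C := 2) (by simp) ?_
    filter_upwards [eventually_le_pow_of_curvature_lt hc.1, eventually_le_pow_of_curvature_lt hc.2]
      with n hu hv
    rw [two_mul]
    gcongr
  · exact curvature_le_of_eventually_le_mul ENNReal.one_ne_top
      (.of_forall fun n => by rw [one_mul]; exact le_self_add)
  · exact curvature_le_of_eventually_le_mul ENNReal.one_ne_top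
      (.of_forall fun n => by rw [one_mul]; exact le_add_self)

lemma curvature_comp_succ_le : curvature (fun n => u (n + 1)) ≤ curvature u := by
  refine le_of_forall_gt_imp_ge_of_dense fun c hc => ?_
  rcases eq_or_ne c ⊤ with rfl | hcT
  · exact le_top
  refine curvature_le_of_eventually_le_mul_pow hcT ?_
  filter_upwards [(tendsto_add_atTop_nat 1).eventually (eventually_le_pow_of_curvature_lt hc)]
    with n hn
  rwa [← pow_succ']

end curvature

theorem stmt3 (x : ℕ → ℕ) (a b : ℝ) (ha : 0 < a) (hb : 0 < b) :
    seqCurv (fun n => a * (x (n + 1) : ℝ) + b * (x n : ℝ)) =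
      seqCurv (fun n => (x n : ℝ)) := by
  have hofReal : ∀ n, ENNReal.ofReal (a * (x (n + 1) : ℝ) + b * (x n : ℝ))
      = ENNReal.ofReal a * x (n + 1) + ENNReal.ofReal b * x n := fun n => by
    rw [ENNReal.ofReal_add (by positivity) (by positivity), ENNReal.ofReal_mul ha.le,
      ENNReal.ofReal_mul hb.le, ENNReal.ofReal_natCast, ENNReal.ofReal_natCast]
  simp only [seqCurv_eq_curvature, hofReal, ENNReal.ofReal_natCast]
  rw [curvature_add, curvature_const_mul (by simpa using ha) ENNReal.ofReal_ne_top,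
    curvature_const_mul (by simpa using hb) ENNReal.ofReal_ne_top]
  exact max_eq_right (curvature_comp_succ_le (u := fun n => (x n : ℝ≥0∞)))

end
end

section
/- Let {a_n} and {b_n} be sequences of non-negative integers and P(t) a nonzero polynomial with non-negative integer coefficients such that the identity of formal Laurent series Σ a_n t^n = (Σ b_n t^n)·P(1/t) holds. Then cx({b_n}) ≤ cx({a_n}) and limsup b_n^{1/n} ≤ limsup a_n^{1/n}. -/
/-! The leading coefficient of `P` is at least `1`, so `b (n + deg P) ≤ a n`. Both the complexity
and the curvature are monotone under eventual domination and do not increase when the index is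
shifted, `n ↦ n - deg P`. -/

open CategoryTheory Filter IsLocalRing
open scoped ENNReal

noncomputable section

lemma le_sum_range_mul_coeff (b : ℕ → ℕ) {P : Polynomial ℕ} (hP : P ≠ 0) (n : ℕ) :
    b (n + P.natDegree) ≤ ∑ i ∈ Finset.range (P.natDegree + 1), b (n + i) * P.coeff i :=
  calc b (n + P.natDegree)
      ≤ b (n + P.natDegree) * P.coeff P.natDegree :=
        Nat.le_mul_of_pos_right _ (Nat.pos_of_ne_zero (Polynomial.leadingCoeff_ne_zero.2 hP))
    _ ≤ ∑ i ∈ Finset.range (P.natDegree + 1), b (n + i) * P.coeff i :=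
        Finset.single_le_sum (f := fun i => b (n + i) * P.coeff i)
          (fun _ _ => Nat.zero_le _) (Finset.self_mem_range_succ _)

lemma zpow_le_two_mul_zpow {x y : ℝ} (hx : 0 < x) (hxy : x ≤ y) (hyx : y ≤ 2 * x) {e : ℤ}
    (he : -1 ≤ e) : x ^ e ≤ 2 * y ^ e := by
  rcases (show e = -1 ∨ 0 ≤ e by omega) with rfl | he
  · rw [zpow_neg_one, zpow_neg_one, ← div_eq_mul_inv, inv_le_iff_one_le_mul₀ hx]
    rw [div_mul_eq_mul_div, one_le_div (hx.trans_le hxy)]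
    linarith
  · have := zpow_le_zpow_left₀ he hx.le hxy
    linarith [zpow_nonneg (hx.le.trans hxy) e]

lemma seqCx_mono {f g : ℕ → ℝ} (h : ∀ᶠ n in atTop, f n ≤ g n) : seqCx f ≤ seqCx g := by
  apply sInf_le_sInf
  rintro _ ⟨c, rfl, α, hα, hg⟩
  exact ⟨c, rfl, α, hα, by filter_upwards [h, hg] with n hfg hgn using hfg.trans hgn⟩

lemma seqCx_comp_sub_le (g : ℕ → ℝ) (j : ℕ) : seqCx (fun n => g (n - j)) ≤ seqCx g := by
  apply sInf_le_sInf
  rintro _ ⟨c, rfl, α, hα, hg⟩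
  refine ⟨c, rfl, 2 * α, by positivity, ?_⟩
  filter_upwards [(tendsto_sub_atTop_nat j).eventually hg, eventually_ge_atTop (2 * j + 1)]
    with n hgn hn
  have hcast : ((n - j : ℕ) : ℝ) = n - j := Nat.cast_sub (by omega)
  have hnj : (2 * j + 1 : ℝ) ≤ n := by exact_mod_cast hn
  have hpow : ((n - j : ℕ) : ℝ) ^ ((c : ℤ) - 1) ≤ 2 * (n : ℝ) ^ ((c : ℤ) - 1) :=
    zpow_le_two_mul_zpow (by rw [hcast]; linarith) (by rw [hcast]; linarith)
      (by rw [hcast]; linarith) (by omega)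
  calc g (n - j) ≤ α * ((n - j : ℕ) : ℝ) ^ ((c : ℤ) - 1) := hgn
    _ ≤ α * (2 * (n : ℝ) ^ ((c : ℤ) - 1)) := mul_le_mul_of_nonneg_left hpow hα.le
    _ = 2 * α * (n : ℝ) ^ ((c : ℤ) - 1) := by ring

lemma seqCurv_mono {f g : ℕ → ℝ} (h : ∀ᶠ n in atTop, f n ≤ g n) :
    seqCurv f ≤ seqCurv g :=
  limsup_le_limsup (h.mono fun _ hn => ENNReal.rpow_le_rpow (ENNReal.ofReal_le_ofReal hn)
    (by positivity)) isCobounded_le_of_bot isBounded_le_of_top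

lemma natCast_rpow_one_div_le {x : ℕ} {m n : ℝ} (hm : 0 < m) (hmn : m ≤ n) :
    (x : ℝ≥0∞) ^ (1 / n) ≤ (x : ℝ≥0∞) ^ (1 / m) := by
  rcases Nat.eq_zero_or_pos x with rfl | hx
  · simp [ENNReal.zero_rpow_of_pos, hm, hm.trans_le hmn]
  · exact ENNReal.rpow_le_rpow_of_exponent_le (by exact_mod_cast hx)
      (one_div_le_one_div_of_le hm hmn)

/-- Only the values `0` and `≥ 1` of an integer sequence matter here: for reals in `(0, 1)` the
inequality `x ^ (1 / (n + j)) ≤ x ^ (1 / n)` would fail. -/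
lemma seqCurv_natCast_comp_sub_le (g : ℕ → ℕ) (j : ℕ) :
    seqCurv (fun n => (g (n - j) : ℝ)) ≤ seqCurv (fun n => (g n : ℝ)) := by
  unfold seqCurv
  rw [← limsup_nat_add _ j]
  refine limsup_le_limsup ?_ isCobounded_le_of_bot isBounded_le_of_top
  filter_upwards [eventually_ge_atTop 1] with n hn
  simp only [Nat.add_sub_cancel, ENNReal.ofReal_natCast, Nat.cast_add]
  exact natCast_rpow_one_div_le (by exact_mod_cast hn) (by linarith [(j.cast_nonneg : (0 : ℝ) ≤ j)])

theorem stmt5 (a b : ℕ → ℕ) (P : Polynomial ℕ) (hP : P ≠ 0)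
    (h : ∀ n, a n = ∑ i ∈ Finset.range (P.natDegree + 1), b (n + i) * P.coeff i) :
    seqCx (fun n => (b n : ℝ)) ≤ seqCx (fun n => (a n : ℝ)) ∧
      seqCurv (fun n => (b n : ℝ)) ≤ seqCurv (fun n => (a n : ℝ)) := by
  set j := P.natDegree
  have hba : ∀ᶠ n in atTop, (b n : ℝ) ≤ a (n - j) := by
    filter_upwards [eventually_ge_atTop j] with n hn
    have := le_sum_range_mul_coeff b hP (n - j)
    rw [← h, Nat.sub_add_cancel hn] at this
    exact_mod_cast this
  exact ⟨(seqCx_mono hba).trans (seqCx_comp_sub_le (fun n => (a n : ℝ)) j),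
    (seqCurv_mono hba).trans (seqCurv_natCast_comp_sub_le a j)⟩

end
end
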